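/- arXiv:1312.0623 — 4 statements merged into one kernel-verified Lean document; each statement's English description precedes it below -/
import Mathlib

section
/- For the standard Dirac matrices and a unit vector ω ∈ S², let P_ω(E) = P⁺(ν(E)ω) for E > m and P_ω(E) = P⁻(ν(E)ω) for E < −m, where ν(E) = √(E²−m²). Then for any unit vector ω₀, P_ω(E)(α·ω₀) = (α·ω₀)P_ω(−E) + (ν(E)/E)⟨ω,ω₀⟩·I₄, and consequently P_ω(E)(α·ω₀)P_ω(E) = (ν(E)/E)⟨ω,ω₀⟩·P_ω(E). -/
/-! With `D = ν (α·ω) + m β` one has `P(e) = ½(1 + e⁻¹ D)`, and the anticommutation relations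
give `D² = ν² + m² = E²` and `D (α·ω₀) + (α·ω₀) D = 2ν⟨ω, ω₀⟩`. The commutation formula only uses
the anticommutator of `D` with `α·ω₀`; the sandwich formula follows from it because
`P(−E) P(E) = ¼ (1 − D²/E²) = 0`. -/

open Finset

theorem anticomm_sum_smul {R A ι : Type*} [CommRing R] [Ring A] [Algebra R A] [Fintype ι]
    [DecidableEq ι] {α : ι → A}
    (hα : ∀ j k, α j * α k + α k * α j = if j = k then (2 : R) • (1 : A) else 0)
    (v w : ι → R) :
    (∑ i, v i • α i) * (∑ i, w i • α i) + (∑ i, w i • α i) * (∑ i, v i • α i) =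
      (2 * ∑ i, v i * w i) • (1 : A) := by
  have hswap : (∑ i, w i • α i) * (∑ i, v i • α i) = ∑ i, ∑ j, (v i * w j) • (α j * α i) := by
    rw [sum_mul_sum, sum_comm]
    simp only [smul_mul_smul_comm, mul_comm (w _)]
  rw [sum_mul_sum, hswap, ← sum_add_distrib]
  simp only [smul_mul_smul_comm, ← sum_add_distrib, ← smul_add, hα, smul_ite, smul_zero,
    sum_ite_eq, mem_univ, if_true, smul_smul, ← sum_smul, ← sum_mul, mul_comm (2 : R)]

theorem sum_smul_mul_self {𝕜 A ι : Type*} [Field 𝕜] [NeZero (2 : 𝕜)] [Ring A] [Algebra 𝕜 A]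
    [Fintype ι] [DecidableEq ι] {α : ι → A}
    (hα : ∀ j k, α j * α k + α k * α j = if j = k then (2 : 𝕜) • (1 : A) else 0) (v : ι → 𝕜) :
    (∑ i, v i • α i) * (∑ i, v i • α i) = (∑ i, v i * v i) • (1 : A) := by
  have h := anticomm_sum_smul hα v v
  rw [← two_smul 𝕜, mul_smul] at h
  exact smul_right_injective A two_ne_zero h

section DiracProj

variable {𝕜 A : Type*} [Field 𝕜] [Ring A] [Algebra 𝕜 A]

noncomputable def diracProj (D : A) (e : 𝕜) : A := (1 / 2 : 𝕜) • (1 + e⁻¹ • D)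

theorem diracProj_mul_eq_mul_diracProj_neg_add [NeZero (2 : 𝕜)] {D c : A} {t : 𝕜}
    (h : D * c + c * D = (2 * t) • (1 : A)) (E : 𝕜) :
    diracProj D E * c = c * diracProj D (-E) + (t / E) • (1 : A) := by
  have hdiff : diracProj D E * c - c * diracProj D (-E) = (1 / 2 * E⁻¹) • (D * c + c * D) := by
    simp only [diracProj, add_mul, mul_add, smul_mul_assoc, mul_smul_comm, one_mul, mul_one,
      inv_neg, neg_smul, mul_neg]
    module
  rw [← sub_eq_iff_eq_add', hdiff, h, smul_smul]
  congr 1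
  field_simp

theorem diracProj_neg_mul_diracProj {D : A} {E : 𝕜} (hE : E ≠ 0) (hD : D * D = E ^ 2 • (1 : A)) :
    diracProj D (-E) * diracProj D E = 0 := by
  have hprod : diracProj D (-E) * diracProj D E =
      ((1 / 2) ^ 2 : 𝕜) • (1 - (E⁻¹ ^ 2) • (D * D)) := by
    simp only [diracProj, add_mul, mul_add, smul_mul_assoc, mul_smul_comm, one_mul, mul_one,
      inv_neg, neg_smul, neg_mul, smul_add, smul_neg, smul_smul]
    module
  rw [hprod, hD, smul_smul, inv_pow, inv_mul_cancel₀ (pow_ne_zero 2 hE), one_smul, sub_self,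
    smul_zero]

theorem diracProj_mul_mul_diracProj [NeZero (2 : 𝕜)] {D c : A} {E t : 𝕜} (hE : E ≠ 0)
    (hD : D * D = E ^ 2 • (1 : A)) (h : D * c + c * D = (2 * t) • (1 : A)) :
    diracProj D E * c * diracProj D E = (t / E) • diracProj D E := by
  rw [diracProj_mul_eq_mul_diracProj_neg_add h, add_mul, mul_assoc,
    diracProj_neg_mul_diracProj hE hD, mul_zero, zero_add, smul_one_mul]

end DiracProj

theorem dirac_projection_commutation_general (α : Fin 4 → Matrix (Fin 4) (Fin 4) ℂ)
    (hAnti : ∀ j k, α j * α k + α k * α j =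
      if j = k then (2 : ℂ) • (1 : Matrix (Fin 4) (Fin 4) ℂ) else 0)
    (m E : ℝ) (hm : 0 < m) (hE : m < |E|)
    (ω ω₀ : Fin 3 → ℝ) (hω : ∑ i, ω i ^ 2 = 1)
    (ν : ℝ) (hν : ν = Real.sqrt (E ^ 2 - m ^ 2))
    (αω αω₀ : Matrix (Fin 4) (Fin 4) ℂ)
    (hαω : αω = ∑ i : Fin 3, ((ω i : ℂ) • α i.castSucc))
    (hαω₀ : αω₀ = ∑ i : Fin 3, ((ω₀ i : ℂ) • α i.castSucc))
    (P : ℝ → Matrix (Fin 4) (Fin 4) ℂ)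
    (hP : ∀ e : ℝ, P e = (1 / 2 : ℂ) • ((1 : Matrix (Fin 4) (Fin 4) ℂ)
      + ((e⁻¹ : ℝ) : ℂ) • ((ν : ℂ) • αω + (m : ℂ) • α 3))) :
    P E * αω₀ = αω₀ * P (-E)
        + ((ν / E * (∑ i, ω i * ω₀ i) : ℝ) : ℂ) • (1 : Matrix (Fin 4) (Fin 4) ℂ) ∧
    P E * αω₀ * P E = ((ν / E * (∑ i, ω i * ω₀ i) : ℝ) : ℂ) • P E := by
  have hE0 : E ≠ 0 := by rintro rfl; rw [abs_zero] at hE; linarith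
  have hν2 : ν ^ 2 = E ^ 2 - m ^ 2 := by
    rw [hν, Real.sq_sqrt]; nlinarith [sq_abs E]
  -- `D` and `α·ω₀` as combinations of all four `α j`, so one Clifford computation covers both.
  set d : Fin 4 → ℝ := ![ν * ω 0, ν * ω 1, ν * ω 2, m]
  set c : Fin 4 → ℝ := ![ω₀ 0, ω₀ 1, ω₀ 2, 0]
  set D : Matrix (Fin 4) (Fin 4) ℂ := ∑ i, (d i : ℂ) • α i
  have hD : (ν : ℂ) • αω + (m : ℂ) • α 3 = D := by
    simp only [D, d, hαω, Fin.sum_univ_four, Fin.sum_univ_three, Matrix.cons_val_zero,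
      Matrix.cons_val_one, Matrix.cons_val, Complex.ofReal_mul, smul_add, smul_smul]
    rfl
  have hC : αω₀ = ∑ i, (c i : ℂ) • α i := by
    simp [Fin.sum_univ_four, Fin.sum_univ_three, c, hαω₀]
  have hdd : ∑ i, d i * d i = E ^ 2 := by
    simp only [d, Fin.sum_univ_four, Fin.sum_univ_three, Matrix.cons_val_zero,
      Matrix.cons_val_one, Matrix.cons_val] at hω ⊢
    linear_combination ν ^ 2 * hω + hν2
  have hdc : ∑ i, d i * c i = ν * ∑ i, ω i * ω₀ i := by
    simp only [d, c, Fin.sum_univ_four, Fin.sum_univ_three, Matrix.cons_val_zero,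
      Matrix.cons_val_one, Matrix.cons_val, mul_zero, add_zero]
    ring
  have hDD : D * D = (E : ℂ) ^ 2 • 1 := by
    rw [sum_smul_mul_self hAnti]
    congr 1
    exact_mod_cast hdd
  have hDC : D * αω₀ + αω₀ * D = (2 * ((ν * ∑ i, ω i * ω₀ i : ℝ) : ℂ)) • 1 := by
    rw [hC, anticomm_sum_smul hAnti]
    congr 2
    exact_mod_cast hdc
  have hPD : ∀ e : ℝ, P e = diracProj D (e : ℂ) := by
    intro e
    rw [hP, hD, diracProj, Complex.ofReal_inv]
  have hscalar : ((ν / E * ∑ i, ω i * ω₀ i : ℝ) : ℂ) = ((ν * ∑ i, ω i * ω₀ i : ℝ) : ℂ) / E := by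
    push_cast
    ring
  rw [hPD, hPD, Complex.ofReal_neg, hscalar]
  exact ⟨diracProj_mul_eq_mul_diracProj_neg_add hDC _,
    diracProj_mul_mul_diracProj (Complex.ofReal_ne_zero.mpr hE0) hDD hDC⟩

/-- For `|E| > m > 0`, `ν(E) = √(E²−m²)`, and unit vectors `ω, ω₀`, the projection
`P_ω(E) = ½(1 + E⁻¹(ν(E)(α·ω) + mβ))` satisfies
`P_ω(E)(α·ω₀) = (α·ω₀)P_ω(−E) + (ν(E)/E)⟨ω,ω₀⟩·I₄` and consequently
`P_ω(E)(α·ω₀)P_ω(E) = (ν(E)/E)⟨ω,ω₀⟩·P_ω(E)`. -/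
theorem dirac_projection_commutation (α : Fin 4 → Matrix (Fin 4) (Fin 4) ℂ)
    (hHerm : ∀ j, (α j).IsHermitian)
    (hAnti : ∀ j k, α j * α k + α k * α j =
      if j = k then (2 : ℂ) • (1 : Matrix (Fin 4) (Fin 4) ℂ) else 0)
    (m E : ℝ) (hm : 0 < m) (hE : m < |E|)
    (ω ω₀ : Fin 3 → ℝ) (hω : ∑ i, ω i ^ 2 = 1) (hω₀ : ∑ i, ω₀ i ^ 2 = 1)
    (ν : ℝ) (hν : ν = Real.sqrt (E ^ 2 - m ^ 2))
    (αω αω₀ : Matrix (Fin 4) (Fin 4) ℂ)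
    (hαω : αω = ∑ i : Fin 3, ((ω i : ℂ) • α i.castSucc))
    (hαω₀ : αω₀ = ∑ i : Fin 3, ((ω₀ i : ℂ) • α i.castSucc))
    (P : ℝ → Matrix (Fin 4) (Fin 4) ℂ)
    (hP : ∀ e : ℝ, P e = (1 / 2 : ℂ) • ((1 : Matrix (Fin 4) (Fin 4) ℂ)
      + ((e⁻¹ : ℝ) : ℂ) • ((ν : ℂ) • αω + (m : ℂ) • α 3))) :
    P E * αω₀ = αω₀ * P (-E)
        + ((ν / E * (∑ i, ω i * ω₀ i) : ℝ) : ℂ) • (1 : Matrix (Fin 4) (Fin 4) ℂ) ∧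
    P E * αω₀ * P E = ((ν / E * (∑ i, ω i * ω₀ i) : ℝ) : ℂ) • P E :=
  dirac_projection_commutation_general α hAnti m E hm hE ω ω₀ hω ν hν αω αω₀ hαω hαω₀ P hP
end

section
/- Fix 0 < δ < 1 and unit vectors ω₀, θ, ω ∈ S² with ⟨ω,ω₀⟩ > δ and ⟨θ,ω₀⟩ > δ. Let ε satisfy √(1−δ²) < ε < 1, and let x̂ ∈ S² be a unit vector with ⟨θ,x̂⟩ > ε. Then ⟨ω,x̂⟩ > −ε. -/
/-!
Measure everything by angles on the sphere. The caps give `∠(ω, ω₀), ∠(ω₀, θ) < arccos δ` and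
`∠(θ, x̂) < arccos ε`, so by the triangle inequality for angles
`∠(ω, x̂) < 2 arccos δ + arccos ε`. The condition `√(1 - δ²) < ε` says `arccos δ < arcsin ε`,
which turns this bound into `∠(ω, x̂) < 2 arcsin ε + arccos ε = π - arccos ε = arccos (-ε)`,
that is, `⟪ω, x̂⟫ > -ε`.
-/

open scoped RealInnerProductSpace

open Real InnerProductGeometry

section UnitVectors

variable {V : Type*} [NormedAddCommGroup V] [InnerProductSpace ℝ V] {u v : V}

lemma angle_eq_arccos_inner_of_norm_eq_one (hu : ‖u‖ = 1) (hv : ‖v‖ = 1) :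
    angle u v = arccos ⟪u, v⟫ := by
  simp [angle, hu, hv]

lemma inner_mem_Icc_of_norm_eq_one (hu : ‖u‖ = 1) (hv : ‖v‖ = 1) :
    ⟪u, v⟫ ∈ Set.Icc (-1 : ℝ) 1 := by
  have h := abs_real_inner_le_norm u v
  rw [hu, hv, mul_one] at h
  exact abs_le.mp h

lemma angle_lt_arccos_iff_lt_inner (hu : ‖u‖ = 1) (hv : ‖v‖ = 1) {c : ℝ} (hc : -1 ≤ c) :
    angle u v < arccos c ↔ c < ⟪u, v⟫ := by
  have hinner := inner_mem_Icc_of_norm_eq_one hu hv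
  rw [angle_eq_arccos_inner_of_norm_eq_one hu hv]
  rcases le_or_gt c 1 with hc1 | hc1
  · exact strictAntiOn_arccos.lt_iff_gt hinner ⟨hc, hc1⟩
  · rw [arccos_of_one_le hc1.le]
    exact iff_of_false (arccos_nonneg _).not_gt (by linarith [hinner.2])

end UnitVectors

lemma arccos_lt_arcsin_of_sqrt_one_sub_sq_lt {δ ε : ℝ} (hδ : 0 ≤ δ)
    (h : √(1 - δ ^ 2) < ε) (hε : ε ≤ 1) : arccos δ < arcsin ε := by
  rw [arccos_eq_arcsin hδ]
  exact arcsin_lt_arcsin (by linarith [sqrt_nonneg (1 - δ ^ 2)]) h hε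

theorem cap_propagation_general (δ ε : ℝ) (hδ0 : 0 < δ)
    (ω₀ θ ω xhat : EuclideanSpace ℝ (Fin 3))
    (hω₀ : ‖ω₀‖ = 1) (hθ : ‖θ‖ = 1) (hω : ‖ω‖ = 1) (hx : ‖xhat‖ = 1)
    (hωcap : δ < ⟪ω, ω₀⟫) (hθcap : δ < ⟪θ, ω₀⟫)
    (hε1 : Real.sqrt (1 - δ ^ 2) < ε) (hε2 : ε < 1)
    (hθx : ε < ⟪θ, xhat⟫) :
    -ε < ⟪ω, xhat⟫ := by
  have hε0 : 0 < ε := (sqrt_nonneg _).trans_lt hε1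
  have hωω₀ : angle ω ω₀ < arccos δ := (angle_lt_arccos_iff_lt_inner hω hω₀ (by linarith)).2 hωcap
  have hω₀θ : angle ω₀ θ < arccos δ := by
    rw [angle_comm]
    exact (angle_lt_arccos_iff_lt_inner hθ hω₀ (by linarith)).2 hθcap
  have hθx' : angle θ xhat < arccos ε := (angle_lt_arccos_iff_lt_inner hθ hx (by linarith)).2 hθx
  have hδε := arccos_lt_arcsin_of_sqrt_one_sub_sq_lt hδ0.le hε1 hε2.le
  refine (angle_lt_arccos_iff_lt_inner hω hx (by linarith)).1 ?_
  calc angle ω xhat ≤ angle ω ω₀ + angle ω₀ θ + angle θ xhat := by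
        linarith [angle_le_angle_add_angle ω ω₀ xhat, angle_le_angle_add_angle ω₀ θ xhat]
    _ < 2 * arcsin ε + arccos ε := by linarith
    _ = arccos (-ε) := by rw [arccos_neg, arcsin_eq_pi_div_two_sub_arccos]; ring

/-- Geometric propagation lemma: if `ω, θ` lie in the spherical cap
`Ω₊(ω₀,δ)` and `√(1−δ²) < ε < 1`, then `⟨θ,x̂⟩ > ε` implies `⟨ω,x̂⟩ > −ε`
for any unit vector `x̂`. -/
theorem cap_propagation (δ ε : ℝ) (hδ0 : 0 < δ) (hδ1 : δ < 1)
    (ω₀ θ ω xhat : EuclideanSpace ℝ (Fin 3))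
    (hω₀ : ‖ω₀‖ = 1) (hθ : ‖θ‖ = 1) (hω : ‖ω‖ = 1) (hx : ‖xhat‖ = 1)
    (hωcap : δ < ⟪ω, ω₀⟫) (hθcap : δ < ⟪θ, ω₀⟫)
    (hε1 : Real.sqrt (1 - δ ^ 2) < ε) (hε2 : ε < 1)
    (hθx : ε < ⟪θ, xhat⟫) :
    -ε < ⟪ω, xhat⟫ :=
  cap_propagation_general δ ε hδ0 ω₀ θ ω xhat hω₀ hθ hω hx hωcap hθcap hε1 hε2 hθx
end

section
/- Fix 0 < δ < 1 and set δ' = √((1+δ)/2). For unit vectors ω₁, ω₂ ∈ S², define O⁺(ωⱼ) = {ω ∈ S² : ⟨ω,ωⱼ⟩ > δ'}. If ω₀ ∈ O⁺(ω₁) ∩ O⁺(ω₂), then O⁺(ω₁) ∪ O⁺(ω₂) ⊆ {ω ∈ S² : ⟨ω,ω₀⟩ > δ}. -/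
/-! For unit vectors, `⟪ω, ωⱼ⟫ > δ' = cos θ` says that `ω` lies within angle `θ ≤ π/2` of `ωⱼ`.
Since `ω₀` does too, the triangle inequality for angles puts `ω` within angle `2θ ≤ π` of `ω₀`,
and `cos 2θ = 2δ'² - 1 = δ`. -/

open scoped RealInnerProductSpace

open Real

namespace InnerProductGeometry

variable {V : Type*} [NormedAddCommGroup V] [InnerProductSpace ℝ V]

theorem angle_lt_arccos_of_lt_inner {u n : V} (hu : ‖u‖ = 1) (hn : ‖n‖ = 1) {c : ℝ}
    (hc : -1 ≤ c) (h : c < ⟪u, n⟫) : angle u n < arccos c := by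
  rw [angle, hu, hn, one_mul, div_one]
  exact arccos_lt_arccos hc h (by simpa [hu, hn] using real_inner_le_norm u n)

theorem two_mul_sq_sub_one_lt_inner {u v n : V} (hu : ‖u‖ = 1) (hv : ‖v‖ = 1)
    (hn : ‖n‖ = 1) {c : ℝ} (hc : 0 ≤ c) (hun : c < ⟪u, n⟫) (hvn : c < ⟪v, n⟫) :
    2 * c ^ 2 - 1 < ⟪u, v⟫ := by
  have hc1 : c ≤ 1 := hun.le.trans (by simpa [hu, hn] using real_inner_le_norm u n)
  have hθ : arccos c ≤ π / 2 := arccos_le_pi_div_two.mpr hc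
  have hangle : angle u v < 2 * arccos c :=
    calc angle u v ≤ angle u n + angle n v := angle_le_angle_add_angle u n v
      _ < arccos c + arccos c := by
        gcongr
        · exact angle_lt_arccos_of_lt_inner hu hn (by linarith) hun
        · rw [angle_comm]; exact angle_lt_arccos_of_lt_inner hv hn (by linarith) hvn
      _ = 2 * arccos c := by ring
  calc 2 * c ^ 2 - 1 = cos (2 * arccos c) := by
        rw [cos_two_mul, cos_arccos (by linarith) hc1]
    _ < cos (angle u v) := cos_lt_cos_of_nonneg_of_le_pi (angle_nonneg u v) (by linarith) hangle
    _ = ⟪u, v⟫ := (inner_eq_cos_angle_of_norm_eq_one hu hv).symm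

end InnerProductGeometry

theorem cap_covering_general (δ : ℝ) (hδ0 : 0 < δ)
    (δ' : ℝ) (hδ' : δ' = Real.sqrt ((1 + δ) / 2))
    (ω₁ ω₂ ω₀ : EuclideanSpace ℝ (Fin 3))
    (hω₁ : ‖ω₁‖ = 1) (hω₂ : ‖ω₂‖ = 1) (hω₀ : ‖ω₀‖ = 1)
    (h₁ : δ' < ⟪ω₀, ω₁⟫) (h₂ : δ' < ⟪ω₀, ω₂⟫) :
    ∀ ω : EuclideanSpace ℝ (Fin 3), ‖ω‖ = 1 →
      (δ' < ⟪ω, ω₁⟫ ∨ δ' < ⟪ω, ω₂⟫) → δ < ⟪ω, ω₀⟫ := by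
  intro ω hω hω_mem
  have hδ'0 : 0 ≤ δ' := hδ' ▸ sqrt_nonneg _
  have hδ_eq : δ = 2 * δ' ^ 2 - 1 := by
    rw [hδ', sq_sqrt (by linarith)]; ring
  rw [hδ_eq]
  rcases hω_mem with hω_mem | hω_mem
  · exact InnerProductGeometry.two_mul_sq_sub_one_lt_inner hω hω₀ hω₁ hδ'0 hω_mem h₁
  · exact InnerProductGeometry.two_mul_sq_sub_one_lt_inner hω hω₀ hω₂ hδ'0 hω_mem h₂

/-- Covering lemma for spherical caps: with `δ' = √((1+δ)/2)`, if
`ω₀ ∈ O⁺(ω₁) ∩ O⁺(ω₂)` where `O⁺(ωⱼ) = {ω : ⟨ω,ωⱼ⟩ > δ'}`, then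
`O⁺(ω₁) ∪ O⁺(ω₂) ⊆ Ω₊(ω₀,δ) = {ω : ⟨ω,ω₀⟩ > δ}`. -/
theorem cap_covering (δ : ℝ) (hδ0 : 0 < δ) (hδ1 : δ < 1)
    (δ' : ℝ) (hδ' : δ' = Real.sqrt ((1 + δ) / 2))
    (ω₁ ω₂ ω₀ : EuclideanSpace ℝ (Fin 3))
    (hω₁ : ‖ω₁‖ = 1) (hω₂ : ‖ω₂‖ = 1) (hω₀ : ‖ω₀‖ = 1)
    (h₁ : δ' < ⟪ω₀, ω₁⟫) (h₂ : δ' < ⟪ω₀, ω₂⟫) :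
    ∀ ω : EuclideanSpace ℝ (Fin 3), ‖ω‖ = 1 →
      (δ' < ⟪ω, ω₁⟫ ∨ δ' < ⟪ω, ω₂⟫) → δ < ⟪ω, ω₀⟫ :=
  cap_covering_general δ hδ0 δ' hδ' ω₁ ω₂ ω₀ hω₁ hω₂ hω₀ h₁ h₂
end

section
/- Let f ∈ L¹(0,∞) be Hölder continuous at r₀ = ν(E) = √(E²−m²) > 0, where |E| > m > 0. Then lim_{μ→0⁺} (μ/π) ∫₀^∞ f(r) / ((√(r²+m²) − |E|)² + μ²) dr = f(ν(E))·|E|/ν(E). -/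
/-!
Write `√(r² + m²) - |E| = t(r) (r - ν)`, where `t` is the secant slope of `r ↦ √(r² + m²)`
between `ν` and `r`, and compare the kernel `μ / ((t(r) (r - ν))² + μ²)` on `(0, 2ν]` with the
Lorentzian `μ / ((k (r - ν))² + μ²)`, `k = t(ν) = ν / |E|`, whose integral over `(0, 2ν]` is
`2 arctan (k ν / μ) / k → π / k`. The difference tends to `0` by dominated convergence: Hölder
continuity bounds `μ |f r - f ν| / ((t(r) (r - ν))² + μ²)` by a multiple of `|r - ν| ^ (ϑ - 1)`,
and `|t(r) - k| = O(|r - ν|)` keeps the difference of the two kernels bounded. On `(2ν, ∞)` the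
denominator is bounded below by a positive constant, so that part of the integral is `O(μ)`.
-/

open MeasureTheory Set Filter Topology Real

theorem intervalIntegrable_abs_sub_rpow {q : ℝ} (hq : -1 < q) (ν a b : ℝ) :
    IntervalIntegrable (fun r => |r - ν| ^ q) volume a b := by
  have h : LocallyIntegrable (fun x : ℝ => |x| ^ q) :=
    locallyIntegrable_of_norm_le_rpow (μ := volume) (C := 1) (α := -q) (by simp)
      (by simp; linarith) (ae_of_all _ fun x => by simp [abs_rpow_of_nonneg (abs_nonneg x)])
      (continuous_abs.measurable.pow_const q).aestronglyMeasurable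
  simpa using ((h.integrableOn_isCompact isCompact_uIcc).intervalIntegrable
    (a := a - ν) (b := b - ν)).comp_sub_right ν

theorem integral_inv_mul_sub_sq_add_sq {k μ : ℝ} (hk : k ≠ 0) (hμ : μ ≠ 0) (ν d : ℝ) :
    ∫ r in (ν - d)..(ν + d), ((k * (r - ν)) ^ 2 + μ ^ 2)⁻¹
      = 2 * arctan (k * d / μ) / (k * μ) := by
  have hderiv (r : ℝ) : HasDerivAt (fun r => arctan (k * (r - ν) / μ) / (k * μ))
      ((k * (r - ν)) ^ 2 + μ ^ 2)⁻¹ r := by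
    refine (((((hasDerivAt_id' r).sub_const ν).const_mul k).div_const μ).arctan.div_const
      (k * μ)).congr_deriv ?_
    field_simp
    ring
  rw [intervalIntegral.integral_eq_sub_of_hasDerivAt (fun r _ => hderiv r)
    (Continuous.intervalIntegrable (by fun_prop (disch := intro; positivity)) _ _)]
  simp only [add_sub_cancel_left, sub_sub_cancel_left, mul_neg, neg_div, arctan_neg]
  ring

theorem tendsto_mul_integral_inv_mul_sub_sq_add_sq {k d : ℝ} (hk : 0 < k) (hd : 0 < d) (ν : ℝ) :
    Tendsto (fun μ => μ * ∫ r in (ν - d)..(ν + d), ((k * (r - ν)) ^ 2 + μ ^ 2)⁻¹)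
      (𝓝[>] 0) (𝓝 (π / k)) := by
  have hatTop : Tendsto (fun μ => k * d / μ) (𝓝[>] 0) atTop := by
    simpa only [div_eq_mul_inv] using tendsto_inv_nhdsGT_zero.const_mul_atTop (mul_pos hk hd)
  have harctan := (tendsto_arctan_atTop.mono_right nhdsWithin_le_nhds).comp hatTop
  refine ((harctan.const_mul (2 / k)).congr' ?_).trans_eq (by field_simp)
  filter_upwards [self_mem_nhdsWithin] with μ (hμ : 0 < μ)
  rw [integral_inv_mul_sub_sq_add_sq hk.ne' hμ.ne']
  simp only [Function.comp]
  field_simp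

theorem MeasureTheory.IntegrableOn.div_sq_add_sq {α : Type*} [MeasurableSpace α]
    {ρ : Measure α} {f g : α → ℝ} {s : Set α} {μ : ℝ} (hf : IntegrableOn f s ρ)
    (hg : Measurable g) (hμ : μ ≠ 0) :
    IntegrableOn (fun x => f x / (g x ^ 2 + μ ^ 2)) s ρ := by
  simp only [div_eq_mul_inv]
  refine hf.mul_bdd (c := (μ ^ 2)⁻¹) (by fun_prop) (ae_of_all _ fun x => ?_)
  rw [norm_inv, Real.norm_of_nonneg (by positivity)]
  gcongr
  nlinarith [sq_nonneg (g x)]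

theorem tendsto_mul_setIntegral_div_sq_add_sq_of_le_abs {α : Type*} [MeasurableSpace α]
    {ρ : Measure α} {f g : α → ℝ} {s : Set α} {δ : ℝ} (hf : IntegrableOn f s ρ)
    (hs : MeasurableSet s) (hδ : 0 < δ) (hg : ∀ x ∈ s, δ ≤ |g x|) :
    Tendsto (fun μ => μ * ∫ x in s, f x / (g x ^ 2 + μ ^ 2) ∂ρ) (𝓝 0) (𝓝 0) := by
  set B := ∫ x in s, |f x| / δ ^ 2 ∂ρ
  have hbound (μ : ℝ) : ‖∫ x in s, f x / (g x ^ 2 + μ ^ 2) ∂ρ‖ ≤ B := by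
    refine norm_integral_le_of_norm_le (hf.abs.div_const _)
      (ae_restrict_of_forall_mem hs fun x hx => ?_)
    rw [Real.norm_eq_abs, abs_div, abs_of_nonneg (by positivity : 0 ≤ g x ^ 2 + μ ^ 2)]
    gcongr
    nlinarith [hg x hx, sq_abs (g x), sq_nonneg μ]
  refine squeeze_zero_norm (fun μ => ?_) (?_ : Tendsto (fun μ : ℝ => |μ| * B) _ _)
  · rw [norm_mul, Real.norm_eq_abs]
    exact mul_le_mul_of_nonneg_left (hbound μ) (abs_nonneg μ)
  · simpa using (continuous_abs.mul continuous_const).tendsto (0 : ℝ) (f := fun μ : ℝ => |μ| * B)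

theorem div_sq_add_sq_le_inv_two_mul {y : ℝ} (hy : 0 < y) (μ : ℝ) :
    μ / (y ^ 2 + μ ^ 2) ≤ (2 * y)⁻¹ := by
  rw [div_le_iff₀ (by positivity), inv_mul_eq_div, le_div_iff₀ (by positivity)]
  nlinarith [sq_nonneg (y - μ)]

theorem abs_mul_sub_div_sq_add_sq_le {t k c C L ϑ μ x u v : ℝ} (hc : 0 < c) (hct : c ≤ t)
    (ht1 : t ≤ 1) (hk : 0 < k) (hk1 : k ≤ 1) (htk : |t - k| ≤ C * |x|) (hx : x ≠ 0)
    (hμ : 0 < μ) (huv : |u - v| ≤ L * |x| ^ ϑ) :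
    |μ * (u / ((t * x) ^ 2 + μ ^ 2) - v / ((k * x) ^ 2 + μ ^ 2))|
      ≤ L / (2 * c) * |x| ^ (ϑ - 1) + C * |v| / (c ^ 2 * k) := by
  set X := |x|
  have hX : 0 < X := abs_pos.mpr hx
  have hsq : x ^ 2 = X ^ 2 := (sq_abs x).symm
  have ht : 0 < t := hc.trans_le hct
  have hG : c ^ 2 * X ^ 2 ≤ (t * X) ^ 2 + μ ^ 2 := by
    have hcX : c * X ≤ t * X := by gcongr
    nlinarith [mul_self_le_mul_self (by positivity) hcX, sq_nonneg μ]
  have hsplit : μ * (u / ((t * x) ^ 2 + μ ^ 2) - v / ((k * x) ^ 2 + μ ^ 2))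
      = (u - v) * (μ / ((t * X) ^ 2 + μ ^ 2))
        + v * (k - t) * ((k + t) * X ^ 2 * (μ / ((k * X) ^ 2 + μ ^ 2))
          / ((t * X) ^ 2 + μ ^ 2)) := by
    simp only [mul_pow, hsq]
    field_simp
    ring
  have hHolder : |(u - v) * (μ / ((t * X) ^ 2 + μ ^ 2))| ≤ L / (2 * c) * X ^ (ϑ - 1) :=
    calc |(u - v) * (μ / ((t * X) ^ 2 + μ ^ 2))|
        ≤ L * X ^ ϑ * (2 * (c * X))⁻¹ := by
          rw [abs_mul, abs_of_pos (by positivity : 0 < μ / ((t * X) ^ 2 + μ ^ 2))]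
          refine mul_le_mul huv ((div_sq_add_sq_le_inv_two_mul (by positivity) μ).trans
            (by gcongr)) (by positivity) ((abs_nonneg _).trans huv)
      _ = L / (2 * c) * X ^ (ϑ - 1) := by
          rw [rpow_sub_one hX.ne']
          field_simp
  have hSlope : |v * (k - t) * ((k + t) * X ^ 2 * (μ / ((k * X) ^ 2 + μ ^ 2))
      / ((t * X) ^ 2 + μ ^ 2))| ≤ C * |v| / (c ^ 2 * k) :=
    calc _ ≤ |v| * (C * X) * (2 * X ^ 2 * (2 * (k * X))⁻¹ / (c ^ 2 * X ^ 2)) := by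
          rw [abs_mul, abs_mul, abs_sub_comm, abs_of_pos (by positivity : 0 < (k + t) * X ^ 2
            * (μ / ((k * X) ^ 2 + μ ^ 2)) / ((t * X) ^ 2 + μ ^ 2))]
          gcongr
          · exact mul_nonneg (abs_nonneg v) ((abs_nonneg _).trans htk)
          · linarith
          · exact div_sq_add_sq_le_inv_two_mul (by positivity) μ
      _ = C * |v| / (c ^ 2 * k) := by
          field_simp
  calc _ ≤ _ := hsplit ▸ abs_add_le _ _
    _ ≤ _ := add_le_add hHolder hSlope

/-- The secant slope of `r ↦ √(r² + m²)` between `ν` and `r`, in a form without the removable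
singularity at `r = ν`. -/
noncomputable def secantSlope (m ν r : ℝ) : ℝ :=
  (r + ν) / (√(r ^ 2 + m ^ 2) + √(ν ^ 2 + m ^ 2))

theorem sqrt_sub_sqrt_eq_secantSlope_mul (m ν r : ℝ) :
    √(r ^ 2 + m ^ 2) - √(ν ^ 2 + m ^ 2) = secantSlope m ν r * (r - ν) := by
  have hr := sq_sqrt (by positivity : 0 ≤ r ^ 2 + m ^ 2)
  have hν := sq_sqrt (by positivity : 0 ≤ ν ^ 2 + m ^ 2)
  have hr0 := sqrt_nonneg (r ^ 2 + m ^ 2)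
  have hν0 := sqrt_nonneg (ν ^ 2 + m ^ 2)
  rcases (add_nonneg hr0 hν0).eq_or_lt with hD | hD
  · obtain rfl : r = 0 := by nlinarith
    obtain rfl : ν = 0 := by nlinarith
    simp
  · rw [secantSlope, div_mul_eq_mul_div, eq_div_iff hD.ne']
    linear_combination hr - hν

theorem secantSlope_le_one (m ν r : ℝ) : secantSlope m ν r ≤ 1 :=
  div_le_one_of_le₀
    (add_le_add (le_sqrt_of_sq_le (by nlinarith)) (le_sqrt_of_sq_le (by nlinarith)))
    (by positivity)

theorem div_le_secantSlope {m ν r : ℝ} (hm : 0 ≤ m) (hν : 0 < ν) (hr : 0 ≤ r) :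
    ν / (m + √(ν ^ 2 + m ^ 2)) ≤ secantSlope m ν r := by
  have hg : √(r ^ 2 + m ^ 2) ≤ r + m := sqrt_le_iff.mpr ⟨by positivity, by nlinarith⟩
  have ha : ν ≤ √(ν ^ 2 + m ^ 2) := le_sqrt_of_sq_le (by nlinarith)
  rw [secantSlope, div_le_div_iff₀ (by positivity) (by positivity)]
  nlinarith

theorem div_mul_abs_sub_le_abs_secantSlope_mul {m ν r : ℝ} (hm : 0 ≤ m) (hν : 0 < ν)
    (hr : 0 ≤ r) : ν / (m + √(ν ^ 2 + m ^ 2)) * |r - ν| ≤ |secantSlope m ν r * (r - ν)| := by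
  have hct := div_le_secantSlope hm hν hr
  rw [abs_mul, abs_of_nonneg ((by positivity : (0 : ℝ) ≤ _).trans hct)]
  exact mul_le_mul_of_nonneg_right hct (abs_nonneg _)

theorem abs_secantSlope_sub_le {m ν r : ℝ} (hm : 0 < m) (hν : 0 < ν) (hr : 0 ≤ r) :
    |secantSlope m ν r - ν / √(ν ^ 2 + m ^ 2)|
      ≤ m / (√(ν ^ 2 + m ^ 2) * (m + √(ν ^ 2 + m ^ 2))) * |r - ν| := by
  unfold secantSlope
  set g := √(r ^ 2 + m ^ 2)
  set a := √(ν ^ 2 + m ^ 2)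
  have hg2 : g ^ 2 = r ^ 2 + m ^ 2 := sq_sqrt (by positivity)
  have ha2 : a ^ 2 = ν ^ 2 + m ^ 2 := sq_sqrt (by positivity)
  have hmg : m ≤ g := le_sqrt_of_sq_le (by nlinarith)
  have hma : m ≤ a := le_sqrt_of_sq_le (by nlinarith)
  have ha0 : 0 < a := hm.trans_le hma
  have hpos : 0 < a * r + ν * g := by nlinarith
  have hnum : |a * r - ν * g| ≤ m * |r - ν| := by
    refine le_of_mul_le_mul_right ?_ hpos
    calc |a * r - ν * g| * (a * r + ν * g) = m * |r - ν| * (m * (r + ν)) := by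
          have hfactor : (a * r - ν * g) * (a * r + ν * g) = m ^ 2 * ((r - ν) * (r + ν)) := by
            linear_combination r ^ 2 * ha2 - ν ^ 2 * hg2
          rw [← abs_of_pos hpos, ← abs_mul, hfactor, abs_mul, abs_mul, abs_sq,
            abs_of_pos (by positivity : 0 < r + ν)]
          ring
      _ ≤ m * |r - ν| * (a * r + ν * g) := by gcongr; nlinarith
  have hdiff : (r + ν) / (g + a) - ν / a = (a * r - ν * g) / (a * (g + a)) := by
    rw [div_sub_div _ _ (by positivity) ha0.ne']
    ring
  rw [hdiff, abs_div, abs_of_pos (by positivity : 0 < a * (g + a))]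
  calc |a * r - ν * g| / (a * (g + a)) ≤ m * |r - ν| / (a * (m + a)) :=
        div_le_div₀ (by positivity) hnum (by positivity) (by gcongr)
    _ = _ := by ring

theorem tendsto_mul_setIntegral_sub_div_sq_add_sq {f t : ℝ → ℝ} {ν k c C L ϑ a b : ℝ}
    (hf : IntegrableOn f (Ioc a b)) (ht : Measurable t) (hc : 0 < c) (hk : 0 < k) (hk1 : k ≤ 1)
    (hϑ : 0 < ϑ) (hct : ∀ r ∈ Ioc a b, c ≤ t r) (ht1 : ∀ r ∈ Ioc a b, t r ≤ 1)
    (htk : ∀ r ∈ Ioc a b, |t r - k| ≤ C * |r - ν|)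
    (hHolder : ∀ r ∈ Ioc a b, |f r - f ν| ≤ L * |r - ν| ^ ϑ) :
    Tendsto (fun μ => μ * ∫ r in Ioc a b,
        (f r / ((t r * (r - ν)) ^ 2 + μ ^ 2) - f ν / ((k * (r - ν)) ^ 2 + μ ^ 2)))
      (𝓝[>] 0) (𝓝 0) := by
  simp_rw [← integral_const_mul]
  have hae : ∀ᵐ r ∂volume.restrict (Ioc a b), r ∈ Ioc a b ∧ r ≠ ν := by
    filter_upwards [ae_restrict_mem measurableSet_Ioc, ae_restrict_of_ae (volume.ae_ne ν)]
      with r hr hrν using ⟨hr, hrν⟩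
  have hmeas (μ : ℝ) : AEStronglyMeasurable (fun r => μ * (f r / ((t r * (r - ν)) ^ 2 + μ ^ 2)
      - f ν / ((k * (r - ν)) ^ 2 + μ ^ 2))) (volume.restrict (Ioc a b)) := by
    have := hf.aestronglyMeasurable.aemeasurable
    exact (by fun_prop : AEMeasurable _ _).aestronglyMeasurable
  have hbound : ∀ᶠ μ in 𝓝[>] 0, ∀ᵐ r ∂volume.restrict (Ioc a b),
      ‖μ * (f r / ((t r * (r - ν)) ^ 2 + μ ^ 2) - f ν / ((k * (r - ν)) ^ 2 + μ ^ 2))‖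
        ≤ L / (2 * c) * |r - ν| ^ (ϑ - 1) + C * |f ν| / (c ^ 2 * k) := by
    filter_upwards [self_mem_nhdsWithin] with μ (hμ : 0 < μ)
    filter_upwards [hae] with r ⟨hr, hrν⟩
    exact abs_mul_sub_div_sq_add_sq_le hc (hct r hr) (ht1 r hr) hk hk1 (htk r hr)
      (sub_ne_zero.2 hrν) hμ (hHolder r hr)
  have hint : IntegrableOn (fun r => L / (2 * c) * |r - ν| ^ (ϑ - 1) + C * |f ν| / (c ^ 2 * k))
      (Ioc a b) :=
    ((intervalIntegrable_abs_sub_rpow (by linarith) ν a b).1.const_mul _).add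
      (integrableOn_const (by simp))
  have hlim : ∀ᵐ r ∂volume.restrict (Ioc a b), Tendsto (fun μ : ℝ =>
      μ * (f r / ((t r * (r - ν)) ^ 2 + μ ^ 2) - f ν / ((k * (r - ν)) ^ 2 + μ ^ 2)))
      (𝓝[>] 0) (𝓝 0) := by
    filter_upwards [hae] with r ⟨hr, hrν⟩
    have htr : t r * (r - ν) ≠ 0 := mul_ne_zero (hc.trans_le (hct r hr)).ne' (sub_ne_zero.2 hrν)
    have hkr : k * (r - ν) ≠ 0 := mul_ne_zero hk.ne' (sub_ne_zero.2 hrν)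
    have hcont : ContinuousAt (fun μ : ℝ => μ * (f r / ((t r * (r - ν)) ^ 2 + μ ^ 2)
        - f ν / ((k * (r - ν)) ^ 2 + μ ^ 2))) 0 := by
      fun_prop (disch := positivity)
    simpa using hcont.tendsto.mono_left nhdsWithin_le_nhds
  simpa using tendsto_integral_filter_of_dominated_convergence (f := fun _ => 0) _
    (Eventually.of_forall hmeas) hbound hint hlim

theorem tendsto_mul_setIntegral_div_sq_sqrt_sub_add_sq {f : ℝ → ℝ} {m ν L ϑ : ℝ} (hm : 0 < m)
    (hν : 0 < ν) (hϑ : 0 < ϑ) (hf : IntegrableOn f (Ioi 0))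
    (hHolder : ∀ r ∈ Ioi (0 : ℝ), |f r - f ν| ≤ L * |r - ν| ^ ϑ) :
    Tendsto (fun μ => μ * ∫ r in Ioi 0,
        f r / ((√(r ^ 2 + m ^ 2) - √(ν ^ 2 + m ^ 2)) ^ 2 + μ ^ 2))
      (𝓝[>] 0) (𝓝 (π * f ν * √(ν ^ 2 + m ^ 2) / ν)) := by
  simp_rw [sqrt_sub_sqrt_eq_secantSlope_mul]
  set a := √(ν ^ 2 + m ^ 2)
  have ha : ν < a := lt_sqrt_of_sq_lt (by nlinarith)
  have hk : 0 < ν / a := by positivity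
  have hc : 0 < ν / (m + a) := by positivity
  have hslope : Measurable (secantSlope m ν) := by unfold secantSlope; fun_prop
  have hnear := tendsto_mul_setIntegral_sub_div_sq_add_sq (a := 0) (b := 2 * ν)
    (hf.mono_set Ioc_subset_Ioi_self) hslope hc hk
    (div_le_one_of_le₀ ha.le (by positivity)) hϑ
    (fun r hr => div_le_secantSlope hm.le hν hr.1.le)
    (fun r _ => secantSlope_le_one m ν r) (fun r hr => abs_secantSlope_sub_le hm hν hr.1.le)
    (fun r hr => hHolder r hr.1)
  have hcenter := (tendsto_mul_integral_inv_mul_sub_sq_add_sq hk hν ν).const_mul (f ν)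
  rw [sub_self, ← two_mul] at hcenter
  have hfar := tendsto_mul_setIntegral_div_sq_add_sq_of_le_abs
    (hf.mono_set (Ioi_subset_Ioi (by linarith : (0 : ℝ) ≤ 2 * ν))) measurableSet_Ioi
    (mul_pos hc hν) (g := fun r => secantSlope m ν r * (r - ν)) fun r (hr : 2 * ν < r) =>
      (mul_le_mul_of_nonneg_left (le_abs.2 (.inl (by linarith))) hc.le).trans
        (div_mul_abs_sub_le_abs_secantSlope_mul hm.le hν (by linarith))
  have hsum := (hnear.add hcenter).add (hfar.mono_left nhdsWithin_le_nhds)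
  rw [zero_add, add_zero, show f ν * (π / (ν / a)) = π * f ν * a / ν by field_simp] at hsum
  refine hsum.congr' ?_
  filter_upwards [self_mem_nhdsWithin] with μ (hμ : 0 < μ)
  have hF := hf.div_sq_add_sq (g := fun r => secantSlope m ν r * (r - ν)) (by fun_prop) hμ.ne'
  have hK : IntegrableOn (fun r => f ν / ((ν / a * (r - ν)) ^ 2 + μ ^ 2)) (Ioc 0 (2 * ν)) :=
    Continuous.integrableOn_Ioc (by fun_prop (disch := intro; positivity))
  rw [← Ioc_union_Ioi_eq_Ioi (by linarith : (0 : ℝ) ≤ 2 * ν),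
    setIntegral_union (Ioc_disjoint_Ioi le_rfl) measurableSet_Ioi
      (hF.mono_set Ioc_subset_Ioi_self) (hF.mono_set (Ioi_subset_Ioi (by linarith))),
    integral_sub (hF.mono_set Ioc_subset_Ioi_self) hK,
    intervalIntegral.integral_of_le (by linarith)]
  simp only [div_eq_mul_inv (f ν), integral_const_mul]
  ring

/-- Delta-concentration limit for the relativistic dispersion relation: if
`f ∈ L¹(0,∞)` is Hölder continuous at `ν(E) = √(E²−m²)`, `|E| > m > 0`, then
`lim_{μ→0⁺} (μ/π)∫₀^∞ f(r)/((√(r²+m²)−|E|)² + μ²) dr = f(ν(E))·|E|/ν(E)`. -/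
theorem delta_concentration (m E : ℝ) (hm : 0 < m) (hE : m < |E|)
    (ν : ℝ) (hν : ν = Real.sqrt (E ^ 2 - m ^ 2))
    (f : ℝ → ℝ) (hf : IntegrableOn f (Set.Ioi 0))
    (hHolder : ∃ L > (0 : ℝ), ∃ ϑ ∈ Set.Ioc (0 : ℝ) 1,
      ∀ r ∈ Set.Ioi (0 : ℝ), |f r - f ν| ≤ L * |r - ν| ^ ϑ) :
    Filter.Tendsto
      (fun μ : ℝ => (μ / Real.pi) *
        ∫ r in Set.Ioi (0 : ℝ),
          f r / ((Real.sqrt (r ^ 2 + m ^ 2) - |E|) ^ 2 + μ ^ 2))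
      (nhdsWithin 0 (Set.Ioi 0))
      (nhds (f ν * |E| / ν)) := by
  obtain ⟨L, -, ϑ, hϑ, hHolder⟩ := hHolder
  have hE2 : 0 < E ^ 2 - m ^ 2 := by nlinarith [sq_abs E]
  have hν0 : 0 < ν := hν ▸ sqrt_pos.2 hE2
  have ha : √(ν ^ 2 + m ^ 2) = |E| := by
    rw [hν, sq_sqrt hE2.le, sub_add_cancel, sqrt_sq_eq_abs]
  have h := (tendsto_mul_setIntegral_div_sq_sqrt_sub_add_sq hm hν0 hϑ.1 hf hHolder).div_const π
  rw [ha, show π * f ν * |E| / ν / π = f ν * |E| / ν by field_simp] at h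
  exact h.congr fun μ => by ring
end
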